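/- For all integers k ≥ 0 and n, m > 0, the map P ↦ g(P) is a bijection from T_{n,k,m} onto the set of integer vectors (g₀, g₁, …, g_{n-1}) satisfying 0 ≤ g₀ ≤ k, gᵢ ≥ 0 for 0 ≤ i < n, and gᵢ ≤ g_{i-1} + m for 1 ≤ i < n. -/

import Mathlib

/-
An `N` step read at offset `k` contributes the entry `k` to the area vector and moves the
offset to `k + m`, while an `E` step lowers the offset by one. So the area vector of `N :: w` is
`k :: g(w)` computed at offset `k + m`, the area vector of `E :: w` at offset `k + 1` is that of
`w` at offset `k`, and both the path conditions and the vector conditions peel off in the same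
way. Induction on the word shows that `g` maps paths to admissible vectors and is injective (the
first entry equals `k` exactly when the path starts with `N`); induction on the vector shows it is
onto: a vector `x :: g` comes from `k - x` east steps, a north step, and a path for `g`.
-/

inductive Letter : Type
  | N : Letter
  | E : Letter
deriving DecidableEq, Repr

/-- The area vector `g(P) = (g₀, …, g_{n-1})` of a lattice word `w` (with the `p`-th
    letter `N` corresponding to the north step in the strip `i ≤ y ≤ i+1`, where `i`
    is the number of `N`'s before it): `gᵢ = k + m·i - xᵢ`, where `xᵢ` is the number
    of east steps before the `(i+1)`-th north step.  This is the number of complete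
    lattice squares in that strip lying right of the path and left of the line
    `x = k + my`. -/
def areaVec (k m : ℕ) (w : List Letter) : List ℤ :=
  (List.range w.length).filterMap fun p =>
    if w[p]? = some Letter.N then
      some ((k : ℤ) + (m : ℤ) * ((w.take p).count Letter.N : ℤ)
        - ((w.take p).count Letter.E : ℤ))
    else none

/-- `w` encodes a trapezoidal lattice path in `T_{n,k,m}`: it goes from `(0,0)` to
    `(k+mn, n)` and never goes strictly right of the line `x = k + my`, i.e. every
    prefix satisfies `#E ≤ k + m·#N`. -/
def IsTrapWord (n k m : ℕ) (w : List Letter) : Prop :=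
  w.count Letter.N = n ∧ w.count Letter.E = k + m * n ∧
    ∀ j : ℕ, (((w.take j).count Letter.E : ℤ)) ≤
      (k : ℤ) + (m : ℤ) * ((w.take j).count Letter.N : ℤ)

open Letter

theorem List.forall_take_cons_iff {α : Type*} {P : List α → Prop} (a : α) (l : List α)
    (h : P []) :
    (∀ j, P ((a :: l).take j)) ↔ ∀ j, P (a :: l.take j) :=
  ⟨fun h' j => h' (j + 1), fun h' j => by cases j; exacts [h, h' _]⟩

/-- The bound `b` on the first entry is `k` for the full vector and `g₀ + m` for its tail. -/
def IsAreaVec (b m : ℤ) (g : List ℤ) : Prop :=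
  (∀ x ∈ g.head?, x ≤ b) ∧ (∀ x ∈ g, 0 ≤ x) ∧ g.IsChain (fun x y => y ≤ x + m)

section IsAreaVec

variable {b m : ℤ}

theorem isAreaVec_nil : IsAreaVec b m [] := by
  simp [IsAreaVec]

theorem isAreaVec_cons {x : ℤ} {g : List ℤ} :
    IsAreaVec b m (x :: g) ↔ 0 ≤ x ∧ x ≤ b ∧ IsAreaVec (x + m) m g := by
  simp only [IsAreaVec, List.head?_cons, Option.mem_def, Option.some.injEq, forall_eq',
    List.mem_cons, forall_eq_or_imp, List.isChain_cons]
  tauto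

theorem IsAreaVec.mono {b' : ℤ} {g : List ℤ} (hb : b ≤ b') (h : IsAreaVec b m g) :
    IsAreaVec b' m g :=
  ⟨fun x hx => (h.1 x hx).trans hb, h.2⟩

end IsAreaVec

section areaVec

variable (k m : ℕ) (w : List Letter)

theorem areaVec_cons_N : areaVec k m (N :: w) = (k : ℤ) :: areaVec (k + m) m w := by
  rw [areaVec, List.length_cons, List.range_succ_eq_map, List.filterMap_cons, List.filterMap_map]
  simp only [List.getElem?_cons_zero, if_pos, List.take_zero, List.count_nil, Nat.cast_zero,
    mul_zero, add_zero, sub_zero]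
  refine congrArg _ (List.filterMap_congr fun p _ => ?_)
  simp only [Function.comp_apply, List.getElem?_cons_succ, List.take_succ_cons, List.count_cons]
  split <;> simp; ring

theorem areaVec_succ_cons_E : areaVec (k + 1) m (E :: w) = areaVec k m w := by
  rw [areaVec, List.length_cons, List.range_succ_eq_map, List.filterMap_cons, List.filterMap_map]
  simp only [List.getElem?_cons_zero]
  refine List.filterMap_congr fun p _ => ?_
  simp only [Function.comp_apply, List.getElem?_cons_succ, List.take_succ_cons, List.count_cons]
  split <;> simp; ring

theorem areaVec_replicate_E_append (d : ℕ) :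
    areaVec (k + d) m (List.replicate d E ++ w) = areaVec k m w := by
  induction d with
  | zero => simp
  | succ d ih => rw [← add_assoc, List.replicate_succ, List.cons_append, areaVec_succ_cons_E, ih]

end areaVec

section IsTrapWord

variable {n k m : ℕ} {w : List Letter}

theorem isTrapWord_nil : IsTrapWord n k m [] ↔ n = 0 ∧ k = 0 := by
  simp +contextual [IsTrapWord, eq_comm]

theorem IsTrapWord.eq_nil (h : IsTrapWord 0 0 m w) : w = [] := by
  obtain ⟨hN, hE, -⟩ := h
  rw [zero_add, mul_zero, List.count_eq_zero] at hE
  rw [List.count_eq_zero] at hN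
  exact List.eq_nil_iff_forall_not_mem.mpr fun
    | N => hN
    | E => hE

theorem isTrapWord_succ_cons_N : IsTrapWord (n + 1) k m (N :: w) ↔ IsTrapWord n (k + m) m w := by
  refine and_congr (by simp) (and_congr (by simp [mul_add]; omega) ?_)
  rw [List.forall_take_cons_iff (P := fun l => (l.count E : ℤ) ≤ k + m * l.count N) _ _
    (by simp)]
  refine forall_congr' fun j => ?_
  simp only [List.count_cons_self, List.count_cons_of_ne (show N ≠ E by decide)]
  push_cast
  ring_nf

theorem IsTrapWord.pos_of_cons_N (h : IsTrapWord n k m (N :: w)) : 0 < n := by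
  rw [← h.1]
  exact List.count_pos_iff.mpr List.mem_cons_self

theorem isTrapWord_succ_cons_E : IsTrapWord n (k + 1) m (E :: w) ↔ IsTrapWord n k m w := by
  refine and_congr (by simp) (and_congr (by simp [add_right_comm]) ?_)
  rw [List.forall_take_cons_iff
    (P := fun l => (l.count E : ℤ) ≤ (k + 1 : ℕ) + m * l.count N) _ _ (by simp; positivity)]
  refine forall_congr' fun j => ?_
  simp only [List.count_cons_self, List.count_cons_of_ne (show E ≠ N by decide)]
  push_cast
  rw [add_right_comm, add_le_add_iff_right]

theorem IsTrapWord.pos_of_cons_E (h : IsTrapWord n k m (E :: w)) : 0 < k := by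
  simpa [Nat.lt_iff_add_one_le] using h.2.2 1

theorem IsTrapWord.replicate_E_append (h : IsTrapWord n k m w) (d : ℕ) :
    IsTrapWord n (k + d) m (List.replicate d E ++ w) := by
  induction d with
  | zero => simpa using h
  | succ d ih => rwa [← add_assoc, List.replicate_succ, List.cons_append, isTrapWord_succ_cons_E]

theorem IsTrapWord.length_areaVec (h : IsTrapWord n k m w) : (areaVec k m w).length = n := by
  induction w generalizing n k with
  | nil => exact (isTrapWord_nil.mp h).1.symm
  | cons a w ih =>
    cases a with
    | N =>
      obtain ⟨n, rfl⟩ := Nat.exists_eq_add_one_of_ne_zero h.pos_of_cons_N.ne'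
      rw [areaVec_cons_N, List.length_cons, ih (isTrapWord_succ_cons_N.mp h)]
    | E =>
      obtain ⟨k, rfl⟩ := Nat.exists_eq_add_one_of_ne_zero h.pos_of_cons_E.ne'
      rw [areaVec_succ_cons_E, ih (isTrapWord_succ_cons_E.mp h)]

theorem IsTrapWord.isAreaVec_areaVec (h : IsTrapWord n k m w) : IsAreaVec k m (areaVec k m w) := by
  induction w generalizing n k with
  | nil => exact isAreaVec_nil
  | cons a w ih =>
    cases a with
    | N =>
      obtain ⟨n, rfl⟩ := Nat.exists_eq_add_one_of_ne_zero h.pos_of_cons_N.ne'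
      rw [areaVec_cons_N, isAreaVec_cons]
      exact ⟨by positivity, le_rfl, by exact_mod_cast ih (isTrapWord_succ_cons_N.mp h)⟩
    | E =>
      obtain ⟨k, rfl⟩ := Nat.exists_eq_add_one_of_ne_zero h.pos_of_cons_E.ne'
      rw [areaVec_succ_cons_E]
      exact (ih (isTrapWord_succ_cons_E.mp h)).mono (by push_cast; linarith)

/-- The area vector of `E :: w` starts below `k`, that of `N :: w'` starts with `k`. -/
theorem IsTrapWord.areaVec_cons_E_ne (h : IsTrapWord n k m (E :: w)) (w' : List Letter) :
    areaVec k m (E :: w) ≠ areaVec k m (N :: w') := by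
  obtain ⟨k, rfl⟩ := Nat.exists_eq_add_one_of_ne_zero h.pos_of_cons_E.ne'
  intro he
  have hw := (isTrapWord_succ_cons_E.mp h).isAreaVec_areaVec
  rw [← areaVec_succ_cons_E, he, areaVec_cons_N, isAreaVec_cons] at hw
  push_cast at hw
  linarith [hw.2.1]

theorem IsTrapWord.eq_of_areaVec_eq {w' : List Letter} (h : IsTrapWord n k m w)
    (h' : IsTrapWord n k m w') (he : areaVec k m w = areaVec k m w') : w = w' := by
  induction w generalizing w' n k with
  | nil =>
    obtain ⟨rfl, rfl⟩ := isTrapWord_nil.mp h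
    exact h'.eq_nil.symm
  | cons a w ih =>
    cases w' with
    | nil =>
      obtain ⟨rfl, rfl⟩ := isTrapWord_nil.mp h'
      exact h.eq_nil
    | cons b w' =>
      cases a <;> cases b
      case N.N =>
        obtain ⟨n, rfl⟩ := Nat.exists_eq_add_one_of_ne_zero h.pos_of_cons_N.ne'
        rw [areaVec_cons_N, areaVec_cons_N, List.cons.injEq] at he
        rw [ih (isTrapWord_succ_cons_N.mp h) (isTrapWord_succ_cons_N.mp h') he.2]
      case N.E => exact absurd he.symm (h'.areaVec_cons_E_ne w)
      case E.N => exact absurd he (h.areaVec_cons_E_ne w')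
      case E.E =>
        obtain ⟨k, rfl⟩ := Nat.exists_eq_add_one_of_ne_zero h.pos_of_cons_E.ne'
        rw [areaVec_succ_cons_E, areaVec_succ_cons_E] at he
        rw [ih (isTrapWord_succ_cons_E.mp h) (isTrapWord_succ_cons_E.mp h') he]

theorem exists_isTrapWord_areaVec_eq {g : List ℤ} (hg : IsAreaVec k m g) :
    ∃ w, IsTrapWord g.length k m w ∧ areaVec k m w = g := by
  induction g generalizing k with
  | nil =>
    have h0 : IsTrapWord 0 0 m [] := isTrapWord_nil.mpr ⟨rfl, rfl⟩
    refine ⟨List.replicate k E ++ [], by simpa using h0.replicate_E_append k, ?_⟩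
    simpa [areaVec] using areaVec_replicate_E_append 0 m [] k
  | cons x g ih =>
    obtain ⟨hx0, hxk, hg⟩ := isAreaVec_cons.mp hg
    lift x to ℕ using hx0
    obtain ⟨w, hw, rfl⟩ := ih (k := x + m) (by exact_mod_cast hg)
    obtain ⟨d, rfl⟩ := Nat.exists_eq_add_of_le (by exact_mod_cast hxk : x ≤ k)
    refine ⟨List.replicate d E ++ N :: w, ?_, ?_⟩
    · exact (isTrapWord_succ_cons_N.mpr hw).replicate_E_append d
    · rw [areaVec_replicate_E_append, areaVec_cons_N]

end IsTrapWord

theorem areaVec_bijOn_general (n k m : ℕ) :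
    Set.BijOn (areaVec k m)
      {w : List Letter | IsTrapWord n k m w}
      {g : List ℤ | g.length = n ∧ (∀ x ∈ g.head?, x ≤ (k : ℤ)) ∧ (∀ x ∈ g, 0 ≤ x) ∧
        List.Chain' (fun x y => y ≤ x + (m : ℤ)) g} := by
  refine ⟨fun w hw => ⟨hw.length_areaVec, hw.isAreaVec_areaVec⟩,
    fun w hw w' hw' he => hw.eq_of_areaVec_eq hw' he, ?_⟩
  rintro g ⟨rfl, hg⟩
  exact exists_isTrapWord_areaVec_eq hg

/-- For `k ≥ 0` and `n, m > 0`, the map `P ↦ g(P)` is a bijection from `T_{n,k,m}`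
    onto the set of integer vectors `(g₀, …, g_{n-1})` with `0 ≤ g₀ ≤ k`, all
    `gᵢ ≥ 0`, and `gᵢ ≤ g_{i-1} + m` for `1 ≤ i < n`. -/
theorem areaVec_bijOn (n k m : ℕ) (hn : 0 < n) (hm : 0 < m) :
    Set.BijOn (areaVec k m)
      {w : List Letter | IsTrapWord n k m w}
      {g : List ℤ | g.length = n ∧ (∀ x ∈ g.head?, x ≤ (k : ℤ)) ∧ (∀ x ∈ g, 0 ≤ x) ∧
        List.Chain' (fun x y => y ≤ x + (m : ℤ)) g} :=
  areaVec_bijOn_general n k m
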